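/- Let G be the capacity-bounded context-free grammar with nonterminals {S, A, B, C}, terminals {a, b, c}, capacity function constantly 1, and rules S→aBbaAb, A→aBb, B→C, C→A, A→BC, A→c. Then L(G) ∩ a*ccb*a*cb* = { aⁿccbⁿaᵐcbᵐ : n ≥ m ≥ 1 }. -/

import Mathlib

/-! Common definitions: symbols, context-free grammars, Ginsburg–Spanier phrase
structure grammars, capacity-bounded derivations, matrix/vector grammars,
finite index, cf Petri nets with place capacities, and language families. -/

inductive Symb (N T : Type) where
  | nt : N → Symb N T
  | tm : T → Symb N T
deriving DecidableEq

namespace CapGram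

variable {N T Δ α : Type}

open Classical in
/-- Number of occurrences of the nonterminal `A` in a sentential form. -/
noncomputable def symCount (A : N) : List (Symb N T) → ℕ
  | [] => 0
  | Symb.nt B :: r => (if B = A then 1 else 0) + symCount A r
  | Symb.tm _ :: r => symCount A r

/-- Total number of nonterminal occurrences in a sentential form. -/
def ntCount : List (Symb N T) → ℕ
  | [] => 0
  | Symb.nt _ :: r => 1 + ntCount r
  | Symb.tm _ :: r => ntCount r

/-- The sentential form `w` respects the capacity function `κ`. -/
def CapOK (κ : N → ℕ) (w : List (Symb N T)) : Prop :=
  ∀ A : N, symCount A w ≤ κ A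

/-- A context-free grammar (rules are pairs of a nonterminal and a word). -/
structure CFG (N T : Type) where
  start : N
  rules : Finset (N × List (Symb N T))

/-- Application of a single context-free rule. -/
def applyRule (r : N × List (Symb N T)) (u v : List (Symb N T)) : Prop :=
  ∃ x y : List (Symb N T), u = x ++ Symb.nt r.1 :: y ∧ v = x ++ r.2 ++ y

def CFG.Step (G : CFG N T) (u v : List (Symb N T)) : Prop :=
  ∃ r ∈ G.rules, applyRule r u v

/-- A derivation step both of whose sentential forms respect the capacity. -/
def CFG.CapStep (G : CFG N T) (κ : N → ℕ) (u v : List (Symb N T)) : Prop :=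
  G.Step u v ∧ CapOK κ u ∧ CapOK κ v

/-- A derivation step both of whose sentential forms have at most `k`
nonterminal occurrences in total. -/
def CFG.IdxStep (G : CFG N T) (k : ℕ) (u v : List (Symb N T)) : Prop :=
  G.Step u v ∧ ntCount u ≤ k ∧ ntCount v ≤ k

/-- The (unrestricted) language of a context-free grammar. -/
def CFG.Lang (G : CFG N T) : Set (List T) :=
  { w | Relation.ReflTransGen G.Step [Symb.nt G.start] (w.map Symb.tm) }

/-- The language of the capacity-bounded grammar `(G, κ)`. -/
def CFG.CapLang (G : CFG N T) (κ : N → ℕ) : Set (List T) :=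
  { w | Relation.ReflTransGen (G.CapStep κ) [Symb.nt G.start] (w.map Symb.tm) }

/-- Words with a derivation of index at most `k`. -/
def CFG.FinLang (G : CFG N T) (k : ℕ) : Set (List T) :=
  { w | Relation.ReflTransGen (G.IdxStep k) [Symb.nt G.start] (w.map Symb.tm) }

/-- A phrase structure grammar due to Ginsburg and Spanier: the left-hand side
of a rule is a nonempty word of nonterminals, encoded as head and tail. -/
structure GSG (N T : Type) where
  start : N
  rules : Finset ((N × List N) × List (Symb N T))

def GSG.Step (G : GSG N T) (u v : List (Symb N T)) : Prop :=
  ∃ r ∈ G.rules, ∃ x y : List (Symb N T),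
    u = x ++ (r.1.1 :: r.1.2).map Symb.nt ++ y ∧ v = x ++ r.2 ++ y

def GSG.CapStep (G : GSG N T) (κ : N → ℕ) (u v : List (Symb N T)) : Prop :=
  G.Step u v ∧ CapOK κ u ∧ CapOK κ v

def GSG.Lang (G : GSG N T) : Set (List T) :=
  { w | Relation.ReflTransGen G.Step [Symb.nt G.start] (w.map Symb.tm) }

def GSG.CapLang (G : GSG N T) (κ : N → ℕ) : Set (List T) :=
  { w | Relation.ReflTransGen (G.CapStep κ) [Symb.nt G.start] (w.map Symb.tm) }

/-- Derivations labeled by their sequence of context-free rules, where every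
sentential form (including the first and last) satisfies the invariant `P`. -/
inductive DerivP (P : List (Symb N T) → Prop) :
    List (N × List (Symb N T)) → List (Symb N T) → List (Symb N T) → Prop
  | nil (u : List (Symb N T)) : P u → DerivP P [] u u
  | cons {r π u v w} : P u → applyRule r u v → DerivP P π v w →
      DerivP P (r :: π) u w

/-- A matrix grammar: a finite set of matrices (sequences of cf rules). -/
structure MG (N T : Type) where
  start : N
  mats : Finset (List (N × List (Symb N T)))

/-- Matrix language: rule sequences are concatenations of matrices. -/
def MG.Lang (G : MG N T) : Set (List T) :=
  { w | ∃ ms : List (List (N × List (Symb N T))),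
      (∀ m ∈ ms, m ∈ G.mats) ∧
      DerivP (fun _ => True) ms.flatten [Symb.nt G.start] (w.map Symb.tm) }

/-- Words with a matrix derivation of index at most `k`. -/
def MG.FinLang (G : MG N T) (k : ℕ) : Set (List T) :=
  { w | ∃ ms : List (List (N × List (Symb N T))),
      (∀ m ∈ ms, m ∈ G.mats) ∧
      DerivP (fun u => ntCount u ≤ k) ms.flatten [Symb.nt G.start] (w.map Symb.tm) }

/-- `Shuffle ms π`: `π` is an interleaving (shuffle) of the lists in `ms`. -/
inductive Shuffle : List (List α) → List α → Prop
  | nil (ms : List (List α)) : (∀ l ∈ ms, l = []) → Shuffle ms []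
  | cons {ms₁ : List (List α)} {l : List α} {ms₂ : List (List α)} {π : List α}
      (a : α) : Shuffle (ms₁ ++ l :: ms₂) π →
      Shuffle (ms₁ ++ (a :: l) :: ms₂) (a :: π)

/-- A vector grammar: like a matrix grammar, but derivations use shuffles. -/
structure VG (N T : Type) where
  start : N
  mats : Finset (List (N × List (Symb N T)))

def VG.Lang (G : VG N T) : Set (List T) :=
  { w | ∃ ms π, (∀ m ∈ ms, m ∈ G.mats) ∧ Shuffle ms π ∧
      DerivP (fun _ => True) π [Symb.nt G.start] (w.map Symb.tm) }

def VG.CapLang (G : VG N T) (κ : N → ℕ) : Set (List T) :=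
  { w | ∃ ms π, (∀ m ∈ ms, m ∈ G.mats) ∧ Shuffle ms π ∧
      DerivP (CapOK κ) π [Symb.nt G.start] (w.map Symb.tm) }

def VG.FinLang (G : VG N T) (k : ℕ) : Set (List T) :=
  { w | ∃ ms π, (∀ m ∈ ms, m ∈ G.mats) ∧ Shuffle ms π ∧
      DerivP (fun u => ntCount u ≤ k) π [Symb.nt G.start] (w.map Symb.tm) }

/-! cf Petri nets: places are in bijection with the nonterminals, transitions
with the rules; firing the transition of rule `A → α` consumes one token from
the place of `A` and adds `|α|_X` tokens to the place of each nonterminal `X`. -/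

open Classical in
/-- Firing of the transition corresponding to rule `r`, turning marking `μ`
into marking `μ'`. -/
noncomputable def ruleFire (r : N × List (Symb N T)) (μ μ' : N → ℕ) : Prop :=
  1 ≤ μ r.1 ∧ ∀ A, μ' A = μ A - (if A = r.1 then 1 else 0) + symCount A r.2

/-- Occurrence sequences of the cf Petri net of `G`, all of whose markings
(including initial and final) satisfy the validity predicate `P`. -/
inductive FireSeqP (G : CFG N T) (P : (N → ℕ) → Prop) :
    List (N × List (Symb N T)) → (N → ℕ) → (N → ℕ) → Prop
  | nil (μ : N → ℕ) : P μ → FireSeqP G P [] μ μ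
  | cons {r π μ μ' μ''} : r ∈ G.rules → P μ → ruleFire r μ μ' →
      FireSeqP G P π μ' μ'' → FireSeqP G P (r :: π) μ μ''

open Classical in
/-- The initial marking: one token on the place of the start symbol. -/
noncomputable def initMark (G : CFG N T) : N → ℕ :=
  fun A => if A = G.start then 1 else 0

/-- The language of `G` controlled by its cf Petri net restricted to markings
satisfying `P` (e.g. a place capacity constraint). -/
def CFG.PNLang (G : CFG N T) (P : (N → ℕ) → Prop) : Set (List T) :=
  { w | ∃ π μ, DerivP (fun _ => True) π [Symb.nt G.start] (w.map Symb.tm) ∧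
      FireSeqP G P π (initMark G) μ }

/-! Language families over a terminal alphabet `T`. -/

/-- Context-free languages of finite index. -/
def CFfin (T : Type) : Set (Set (List T)) :=
  { L | ∃ (N : Type) (_ : Fintype N) (G : CFG N T) (k : ℕ),
      L = G.Lang ∧ G.Lang ⊆ G.FinLang k }

/-- Languages of capacity-bounded context-free grammars. -/
def CFcb (T : Type) : Set (Set (List T)) :=
  { L | ∃ (N : Type) (_ : Fintype N) (G : CFG N T) (κ : N → ℕ),
      L = G.CapLang κ }

/-- Languages of capacity-bounded Ginsburg–Spanier phrase structure grammars. -/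
def GScb (T : Type) : Set (Set (List T)) :=
  { L | ∃ (N : Type) (_ : Fintype N) (G : GSG N T) (κ : N → ℕ),
      L = G.CapLang κ }

/-- Matrix languages of finite index. -/
def MATfin (T : Type) : Set (Set (List T)) :=
  { L | ∃ (N : Type) (_ : Fintype N) (G : MG N T) (k : ℕ),
      L = G.Lang ∧ G.Lang ⊆ G.FinLang k }

/-- Capacity-bounded vector languages (erasing rules allowed). -/
def Vcb (T : Type) : Set (Set (List T)) :=
  { L | ∃ (N : Type) (_ : Fintype N) (G : VG N T) (κ : N → ℕ),
      L = G.CapLang κ }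

/-- Vector languages of finite index (erasing rules allowed). -/
def Vfin (T : Type) : Set (Set (List T)) :=
  { L | ∃ (N : Type) (_ : Fintype N) (G : VG N T) (k : ℕ),
      L = G.Lang ∧ G.Lang ⊆ G.FinLang k }

/-- Languages of grammars controlled by cf Petri nets with place capacities. -/
def PNcap (T : Type) : Set (Set (List T)) :=
  { L | ∃ (N : Type) (_ : Fintype N) (G : CFG N T) (κ : N → ℕ),
      L = G.PNLang (fun μ => ∀ A, μ A ≤ κ A) }


inductive ABC : Type where
  | a : ABC
  | b : ABC
  | c : ABC
deriving DecidableEq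

instance : Fintype ABC :=
  ⟨{ABC.a, ABC.b, ABC.c}, fun x => by cases x <;> simp⟩

/-- The language { aⁿbⁿcⁿ : n ≥ 1 }. -/
def Labc : Set (List ABC) :=
  { w | ∃ n : ℕ, 1 ≤ n ∧
      w = List.replicate n ABC.a ++ List.replicate n ABC.b ++ List.replicate n ABC.c }

inductive NT3 : Type where
  | S | A | B | C
deriving DecidableEq

instance : Fintype NT3 :=
  ⟨{NT3.S, NT3.A, NT3.B, NT3.C}, fun x => by cases x <;> simp⟩

open NT3 Symb in
/-- The grammar of Example 3 with rules S→aBbaAb, A→aBb, B→C, C→A, A→BC, A→c. -/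
def G3 : CFG NT3 ABC where
  start := NT3.S
  rules :=
    { (NT3.S, [tm ABC.a, nt NT3.B, tm ABC.b, tm ABC.a, nt NT3.A, tm ABC.b]),
      (NT3.A, [tm ABC.a, nt NT3.B, tm ABC.b]),
      (NT3.B, [nt NT3.C]),
      (NT3.C, [nt NT3.A]),
      (NT3.A, [nt NT3.B, nt NT3.C]),
      (NT3.A, [tm ABC.c]) }

/-- The regular set a*ccb*a*cb*. -/
def M3 : Set (List ABC) :=
  { w | ∃ i j k l : ℕ,
      w = List.replicate i ABC.a ++ [ABC.c, ABC.c] ++ List.replicate j ABC.b ++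
          List.replicate k ABC.a ++ [ABC.c] ++ List.replicate l ABC.b }

section Example3Aux

set_option linter.constructorNameAsVariable false
set_option maxHeartbeats 1000000

open NT3 Symb ABC

local notation "Sym" => Symb NT3 ABC

/-- terminal word as sentential form -/
def tmw (u : List ABC) : List Sym := u.map Symb.tm

@[simp] lemma tmw_nil : tmw [] = [] := rfl
@[simp] lemma tmw_cons (t : ABC) (u : List ABC) : tmw (t :: u) = Symb.tm t :: tmw u := rfl
@[simp] lemma tmw_append (u v : List ABC) : tmw (u ++ v) = tmw u ++ tmw v := by
  simp [tmw]

@[simp] lemma symCount_nil' (X : NT3) : symCount X ([] : List Sym) = 0 := by simp [symCount]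

@[simp] lemma symCount_tm (X : NT3) (t : ABC) (l : List Sym) :
    symCount X (Symb.tm t :: l) = symCount X l := by simp [symCount]

@[simp] lemma symCount_nt (X Y : NT3) (l : List Sym) :
    symCount X (Symb.nt Y :: l) = (if Y = X then 1 else 0) + symCount X l := by
  simp [symCount]

@[simp] lemma symCount_append (X : NT3) (l₁ l₂ : List Sym) :
    symCount X (l₁ ++ l₂) = symCount X l₁ + symCount X l₂ := by
  induction l₁ with
  | nil => simp
  | cons s l ih =>
    cases s with
    | nt Y => simp [ih]; ring
    | tm t => simp [ih]

@[simp] lemma symCount_tmw (X : NT3) (u : List ABC) : symCount X (tmw u) = 0 := by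
  induction u with
  | nil => simp
  | cons t u ih => simpa using ih

lemma loc1 : ∀ (u : List ABC) (l x y : List Sym) (Z : NT3),
    x ++ Symb.nt Z :: y = tmw u ++ l →
    ∃ x', x = tmw u ++ x' ∧ l = x' ++ Symb.nt Z :: y := by
  intro u
  induction u with
  | nil => intro l x y Z h; exact ⟨x, by simpa using h.symm ▸ rfl, by simpa using h.symm⟩
  | cons t u ih =>
    intro l x y Z h
    cases x with
    | nil => simp at h
    | cons s x =>
      simp only [tmw_cons, List.cons_append, List.cons.injEq] at h
      obtain ⟨hs, h⟩ := h
      obtain ⟨x', hx, hl⟩ := ih l x y Z h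
      exact ⟨x', by simp [hs, hx], hl⟩

lemma no_nt_tmw (u : List ABC) (x y : List Sym) (Z : NT3) :
    x ++ Symb.nt Z :: y ≠ tmw u := by
  intro h
  obtain ⟨x', hx, hl⟩ := loc1 u [] x y Z (by simpa using h)
  exact absurd hl.symm (by simp)

lemma loc2 : ∀ (d : List Sym) (u : List ABC) (x y : List Sym) (Z : NT3),
    x ++ Symb.nt Z :: y = d ++ tmw u →
    ∃ y', d = x ++ Symb.nt Z :: y' ∧ y = y' ++ tmw u := by
  intro d
  induction d with
  | nil => intro u x y Z h; exact absurd h (no_nt_tmw u x y Z)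
  | cons s d ih =>
    intro u x y Z h
    cases x with
    | nil =>
      simp only [List.nil_append, List.cons_append, List.cons.injEq] at h
      exact ⟨d, by simp [h.1.symm], h.2⟩
    | cons s0 x =>
      simp only [List.cons_append, List.cons.injEq] at h
      obtain ⟨hs, h⟩ := h
      obtain ⟨y', hd, hy⟩ := ih u x y Z h
      exact ⟨y', by simp [hs, hd], hy⟩

/-- Over-approximation of sentential forms derivable from a single token. -/
inductive EF : List Sym → Prop
  | var (X : NT3) : EF [Symb.nt X]
  | tc : EF [Symb.tm ABC.c]
  | wrap {s} : EF s → EF (Symb.tm ABC.a :: s ++ [Symb.tm ABC.b])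
  | app {s t} : EF s → EF t → EF (s ++ t)

lemma EF_replace {w : List Sym} (hw : EF w) :
    ∀ (x y : List Sym) (Z : NT3) (r : List Sym), w = x ++ Symb.nt Z :: y → EF r →
      EF (x ++ r ++ y) := by
  induction hw with
  | var X =>
    intro x y Z r h hr
    cases x with
    | nil =>
      simp only [List.nil_append, List.cons.injEq] at h
      simpa [h.2.symm] using hr
    | cons s x =>
      simp only [List.cons_append, List.cons.injEq] at h
      exact absurd h.2.symm (by cases x <;> simp)
  | tc =>
    intro x y Z r h hr
    cases x with
    | nil => simp at h
    | cons s x =>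
      simp only [List.cons_append, List.cons.injEq] at h
      exact absurd h.2.symm (by cases x <;> simp)
  | wrap hs ih =>
    intro x y Z r h hr
    cases x with
    | nil => simp at h
    | cons s0 x =>
      simp only [List.cons_append, List.cons.injEq] at h
      obtain ⟨hs0, h⟩ := h
      obtain ⟨y', hd, hy⟩ := loc2 _ [ABC.b] x y Z h.symm
      have := EF.wrap (ih x y' Z r hd hr)
      rw [← hs0, hy]
      simpa [List.append_assoc] using this
  | app hs ht ihs iht =>
    intro x y Z r h hr
    rw [List.append_eq_append_iff] at h
    rcases h with ⟨a', hx, ht'⟩ | ⟨c', hs', hy⟩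
    · have := iht a' y Z r ht' hr
      rw [hx]
      simpa [List.append_assoc] using EF.app hs this
    · cases c' with
      | nil =>
        simp only [List.nil_append] at hy
        have h2 := iht [] y Z r (by simpa using hy.symm) hr
        have hx : EF x := (hs'.trans (List.append_nil x)) ▸ hs
        simpa [List.append_assoc] using EF.app hx h2
      | cons s0 c'' =>
        simp only [List.cons_append, List.cons.injEq] at hy
        obtain ⟨hs0, hy⟩ := hy
        have h2 := ihs x c'' Z r (by rw [hs', hs0]) hr
        rw [hy]
        have := EF.app h2 ht
        simpa [List.append_assoc] using this

lemma EF_rules_rhs {r : NT3 × List Sym} (hr : r ∈ G3.rules) : EF r.2 := by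
  simp only [G3, Finset.mem_insert, Finset.mem_singleton] at hr
  rcases hr with h | h | h | h | h | h <;> subst h
  · exact EF.app (EF.wrap (EF.var _)) (EF.wrap (EF.var _))
  · exact EF.wrap (EF.var _)
  · exact EF.var _
  · exact EF.var _
  · exact EF.app (EF.var _) (EF.var _)
  · exact EF.tc

lemma EF_step {d d' : List Sym} (hd : EF d) (h : G3.Step d d') : EF d' := by
  obtain ⟨r, hr, x, y, hx, hy⟩ := h
  subst hy
  exact EF_replace hd x y r.1 r.2 hx (EF_rules_rhs hr)

/-- the terminal words derivable from a single token (over-approximation). -/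
inductive W : List ABC → Prop
  | c : W [ABC.c]
  | wrap {u} : W u → W (ABC.a :: u ++ [ABC.b])
  | app {u v} : W u → W v → W (u ++ v)

lemma EF_tmw : ∀ {l : List Sym}, EF l → ∀ u : List ABC, l = tmw u → W u := by
  intro l hl
  induction hl with
  | var X => intro u h; cases u with
    | nil => simp at h
    | cons t u => simp [tmw] at h
  | tc =>
    intro u h
    cases u with
    | nil => simp at h
    | cons t u =>
      simp only [tmw_cons, List.cons.injEq, Symb.tm.injEq] at h
      obtain ⟨rfl, h⟩ := h
      cases u with
      | nil => exact W.c
      | cons s u => simp [tmw] at h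
  | @wrap s hs ih =>
    intro u h
    cases u with
    | nil => simp at h
    | cons t u =>
      simp only [List.cons_append, tmw_cons, List.cons.injEq, Symb.tm.injEq] at h
      obtain ⟨rfl, h⟩ := h
      have h' : List.map Symb.tm u = s ++ [Symb.tm ABC.b] := h.symm
      clear h
      rw [List.map_eq_append_iff] at h'
      obtain ⟨u1, u2, rfl, h1, h2⟩ := h'
      have hu2 : u2 = [ABC.b] := by
        cases u2 with
        | nil => simp at h2
        | cons s u2 =>
          simp only [List.map_cons, List.cons.injEq, Symb.tm.injEq] at h2
          obtain ⟨rfl, h2⟩ := h2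
          cases u2 with
          | nil => rfl
          | cons s' u2 => simp at h2
      subst hu2
      exact W.wrap (ih u1 h1.symm)
  | @app s t hs ht ihs iht =>
    intro u h
    have h' : List.map Symb.tm u = s ++ t := h.symm
    clear h
    rw [List.map_eq_append_iff] at h'
    obtain ⟨u1, u2, rfl, h1, h2⟩ := h'
    exact W.app (ihs u1 h1.symm) (iht u2 h2.symm)

lemma W_count_pos {u : List ABC} (h : W u) : 1 ≤ u.count ABC.c := by
  induction h with
  | c => simp
  | wrap h ih => simpa [List.count_append, List.count_cons] using ih
  | app hu hv ihu ihv => simp only [List.count_append]; omega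

lemma W_count1 {u : List ABC} (h : W u) (hc : u.count ABC.c = 1) :
    ∃ s, u = List.replicate s ABC.a ++ ABC.c :: List.replicate s ABC.b := by
  induction h with
  | c => exact ⟨0, rfl⟩
  | wrap h ih =>
    simp only [List.count_append, List.count_cons, List.count_nil] at hc
    simp at hc
    obtain ⟨s, hs⟩ := ih hc
    refine ⟨s + 1, ?_⟩
    rw [hs, List.replicate_succ, List.replicate_succ']
    simp
  | app hu hv ihu ihv =>
    have := W_count_pos hu
    have := W_count_pos hv
    simp only [List.count_append] at hc
    omega

lemma W_count2 {u : List ABC} (h : W u) (hc : u.count ABC.c = 2) :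
    ∃ p s t, u = List.replicate (p + s) ABC.a ++ ABC.c ::
      (List.replicate s ABC.b ++ List.replicate t ABC.a ++ ABC.c ::
        List.replicate (t + p) ABC.b) := by
  induction h with
  | c => simp at hc
  | wrap h ih =>
    simp only [List.count_append, List.count_cons, List.count_nil] at hc
    simp at hc
    obtain ⟨p, s, t, hu⟩ := ih hc
    refine ⟨p + 1, s, t, ?_⟩
    rw [hu]
    have h1 : p + 1 + s = (p + s) + 1 := by omega
    have h2 : t + (p + 1) = (t + p) + 1 := by omega
    rw [h1, h2, List.replicate_succ, List.replicate_succ' (n := t + p)]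
    simp
  | @app u1 u2 hu hv ihu ihv =>
    have h1 := W_count_pos hu
    have h2 := W_count_pos hv
    simp only [List.count_append] at hc
    have hc1 : u1.count ABC.c = 1 := by omega
    obtain ⟨s, hs⟩ := W_count1 hu hc1
    have hc2 : u2.count ABC.c = 1 := by omega
    obtain ⟨t, ht⟩ := W_count1 hv hc2
    refine ⟨0, s, t, ?_⟩
    rw [hs, ht]
    simp [List.append_assoc]

lemma peel_rep {β γ : ABC} (hne : γ ≠ β) :
    ∀ (x y : ℕ) (l1 l2 : List ABC),
      List.replicate x β ++ γ :: l1 = List.replicate y β ++ γ :: l2 →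
      x = y ∧ l1 = l2 := by
  intro x
  induction x with
  | zero =>
    intro y l1 l2 h
    cases y with
    | zero => simpa using h
    | succ y => rw [List.replicate_succ] at h; simp at h; exact absurd h.1 hne
  | succ x ih =>
    intro y l1 l2 h
    cases y with
    | zero =>
      rw [List.replicate_succ] at h; simp at h; exact absurd h.1.symm hne
    | succ y =>
      rw [List.replicate_succ, List.replicate_succ] at h
      simp only [List.cons_append, List.cons.injEq] at h
      obtain ⟨h1, h2⟩ := ih y l1 l2 h.2
      exact ⟨by omega, h2⟩

/-- a^i · l · b^i -/
def seg (i : ℕ) (l : List Sym) : List Sym :=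
  tmw (List.replicate i ABC.a) ++ l ++ tmw (List.replicate i ABC.b)

/-- the allowed phase-1 configurations -/
def P1 (X Y : NT3) (i j : ℕ) : Prop :=
  1 ≤ i ∧
    ((X = NT3.B ∧ Y = NT3.A ∧ j = i) ∨ (X = NT3.C ∧ Y = NT3.A ∧ j = i) ∨
     (X = NT3.C ∧ Y = NT3.B ∧ j = i + 1) ∨ (X = NT3.A ∧ Y = NT3.B ∧ j = i + 1) ∨
     (X = NT3.A ∧ Y = NT3.C ∧ j = i + 1) ∨ (X = NT3.B ∧ Y = NT3.C ∧ j = i))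

/-- invariant: over-approximation of all sentential forms reachable from S. -/
inductive Reach : List Sym → Prop
  | r0 : Reach [Symb.nt NT3.S]
  | r1 (X Y : NT3) (i j : ℕ) (h : P1 X Y i j) :
      Reach (seg i [Symb.nt X] ++ seg j [Symb.nt Y])
  | r2 (i : ℕ) (d : List Sym) (hi : 1 ≤ i) (hd : EF d) :
      Reach (seg i d ++ seg i [Symb.tm ABC.c])
  | r3 (i j : ℕ) (d : List Sym) (hi : 1 ≤ i) (hd : EF d) :
      Reach (seg i [Symb.tm ABC.c] ++ seg j d)

lemma loc_two {u1 u2 u3 : List ABC} {X Y Z : NT3} {x y : List Sym}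
    (h : x ++ Symb.nt Z :: y =
      tmw u1 ++ Symb.nt X :: (tmw u2 ++ Symb.nt Y :: tmw u3)) :
    (Z = X ∧ x = tmw u1 ∧ y = tmw u2 ++ Symb.nt Y :: tmw u3) ∨
    (Z = Y ∧ x = tmw u1 ++ Symb.nt X :: tmw u2 ∧ y = tmw u3) := by
  obtain ⟨x', hx, hl⟩ := loc1 u1 _ x y Z h
  cases x' with
  | nil =>
    simp only [List.nil_append, List.cons.injEq, Symb.nt.injEq] at hl
    exact Or.inl ⟨hl.1.symm, by simpa using hx, hl.2.symm⟩
  | cons s x'' =>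
    simp only [List.cons_append, List.cons.injEq] at hl
    obtain ⟨hs, hl⟩ := hl
    obtain ⟨x3, hx3, hl3⟩ := loc1 u2 _ x'' y Z hl.symm
    cases x3 with
    | nil =>
      simp only [List.nil_append, List.cons.injEq, Symb.nt.injEq] at hl3
      exact Or.inr ⟨hl3.1.symm, by rw [hx, hx3, ← hs]; simp,
        hl3.2.symm⟩
    | cons s' x4 =>
      simp only [List.cons_append, List.cons.injEq] at hl3
      exact absurd hl3.2.symm (no_nt_tmw u3 x4 y Z)

@[simp] lemma bridge2 (t : ABC) (i : ℕ) (l : List Sym) :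
    Symb.tm t :: (tmw (List.replicate i t) ++ l) =
      tmw (List.replicate i t) ++ Symb.tm t :: l := by
  induction i generalizing l with
  | zero => simp
  | succ i ih =>
    simp only [List.replicate_succ, tmw_cons, List.cons_append]
    rw [ih]

@[simp] lemma bridge1 (t : ABC) (i : ℕ) :
    Symb.tm t :: tmw (List.replicate i t) =
      tmw (List.replicate i t) ++ [Symb.tm t] := by
  simpa using bridge2 t i []

lemma reach_step {u v : List Sym} (hu : Reach u)
    (h : G3.CapStep (fun _ => 1) u v) : Reach v := by
  obtain ⟨⟨r, hr, x, y, hx, hy⟩, hcu, hcv⟩ := h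
  cases hu with
  | r0 =>
    cases x with
    | nil =>
      simp only [List.nil_append, List.cons.injEq, Symb.nt.injEq] at hx
      obtain ⟨hS, hy0⟩ := hx
      subst hy0
      simp only [G3, Finset.mem_insert, Finset.mem_singleton] at hr
      rcases hr with rfl | rfl | rfl | rfl | rfl | rfl
      · subst hy
        convert Reach.r1 NT3.B NT3.A 1 1 ⟨le_refl 1, by simp⟩ using 1
        try simp [seg]
      all_goals simp at hS
    | cons s x => simp at hx
  | r1 X Y i j hP =>
    obtain ⟨hi, hP⟩ := hP
    simp only [G3, Finset.mem_insert, Finset.mem_singleton] at hr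
    rcases hP with ⟨rfl, rfl, rfl⟩ | ⟨rfl, rfl, rfl⟩ | ⟨rfl, rfl, rfl⟩ |
      ⟨rfl, rfl, rfl⟩ | ⟨rfl, rfl, rfl⟩ | ⟨rfl, rfl, rfl⟩
    · -- (B, A, j, j)
      have hx' : x ++ Symb.nt r.1 :: y =
          tmw (List.replicate j ABC.a) ++ Symb.nt NT3.B ::
            (tmw (List.replicate j ABC.b ++ List.replicate j ABC.a) ++
              Symb.nt NT3.A :: tmw (List.replicate j ABC.b)) := by
        rw [← hx]; simp [seg, List.append_assoc]
      rcases loc_two hx' with ⟨hZ, hxx, hyy⟩ | ⟨hZ, hxx, hyy⟩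
      · rcases hr with rfl | rfl | rfl | rfl | rfl | rfl
        · simp at hZ
        · simp at hZ
        · -- B → C at left
          subst hy hxx hyy
          convert Reach.r1 NT3.C NT3.A j j ⟨hi, by simp⟩ using 1
          simp [seg, List.append_assoc]
        · simp at hZ
        · simp at hZ
        · simp at hZ
      · rcases hr with rfl | rfl | rfl | rfl | rfl | rfl
        · simp at hZ
        · -- A → aBb at right : two B's
          have hk := hcv NT3.B
          rw [hy, hxx, hyy] at hk; simp at hk
        · simp at hZ
        · simp at hZ
        · -- A → BC at right : two B's
          have hk := hcv NT3.B
          rw [hy, hxx, hyy] at hk; simp at hk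
        · -- A → c at right
          subst hy hxx hyy
          convert Reach.r2 j [Symb.nt NT3.B] hi (EF.var _) using 1
          simp [seg, List.append_assoc]
    · -- (C, A, j, j)
      have hx' : x ++ Symb.nt r.1 :: y =
          tmw (List.replicate j ABC.a) ++ Symb.nt NT3.C ::
            (tmw (List.replicate j ABC.b ++ List.replicate j ABC.a) ++
              Symb.nt NT3.A :: tmw (List.replicate j ABC.b)) := by
        rw [← hx]; simp [seg, List.append_assoc]
      rcases loc_two hx' with ⟨hZ, hxx, hyy⟩ | ⟨hZ, hxx, hyy⟩
      · rcases hr with rfl | rfl | rfl | rfl | rfl | rfl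
        · simp at hZ
        · simp at hZ
        · simp at hZ
        · -- C → A at left : two A's
          have hk := hcv NT3.A
          rw [hy, hxx, hyy] at hk; simp at hk
        · simp at hZ
        · simp at hZ
      · rcases hr with rfl | rfl | rfl | rfl | rfl | rfl
        · simp at hZ
        · -- A → aBb at right
          subst hy hxx hyy
          convert Reach.r1 NT3.C NT3.B j (j + 1) ⟨hi, by simp⟩ using 1
          simp [seg, List.append_assoc, List.replicate_succ']
        · simp at hZ
        · simp at hZ
        · -- A → BC at right : two C's
          have hk := hcv NT3.C
          rw [hy, hxx, hyy] at hk; simp at hk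
        · -- A → c at right
          subst hy hxx hyy
          convert Reach.r2 j [Symb.nt NT3.C] hi (EF.var _) using 1
          simp [seg, List.append_assoc]
    · -- (C, B, i, i+1)
      have hx' : x ++ Symb.nt r.1 :: y =
          tmw (List.replicate i ABC.a) ++ Symb.nt NT3.C ::
            (tmw (List.replicate i ABC.b ++ List.replicate (i + 1) ABC.a) ++
              Symb.nt NT3.B :: tmw (List.replicate (i + 1) ABC.b)) := by
        rw [← hx]; simp [seg, List.append_assoc]
      rcases loc_two hx' with ⟨hZ, hxx, hyy⟩ | ⟨hZ, hxx, hyy⟩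
      · rcases hr with rfl | rfl | rfl | rfl | rfl | rfl
        · simp at hZ
        · simp at hZ
        · simp at hZ
        · -- C → A at left
          subst hy hxx hyy
          convert Reach.r1 NT3.A NT3.B i (i + 1) ⟨hi, by simp⟩ using 1
          simp [seg, List.append_assoc]
        · simp at hZ
        · simp at hZ
      · rcases hr with rfl | rfl | rfl | rfl | rfl | rfl
        · simp at hZ
        · simp at hZ
        · -- B → C at right : two C's
          have hk := hcv NT3.C
          rw [hy, hxx, hyy] at hk; simp at hk
        · simp at hZ
        · simp at hZ
        · simp at hZ
    · -- (A, B, i, i+1)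
      have hx' : x ++ Symb.nt r.1 :: y =
          tmw (List.replicate i ABC.a) ++ Symb.nt NT3.A ::
            (tmw (List.replicate i ABC.b ++ List.replicate (i + 1) ABC.a) ++
              Symb.nt NT3.B :: tmw (List.replicate (i + 1) ABC.b)) := by
        rw [← hx]; simp [seg, List.append_assoc]
      rcases loc_two hx' with ⟨hZ, hxx, hyy⟩ | ⟨hZ, hxx, hyy⟩
      · rcases hr with rfl | rfl | rfl | rfl | rfl | rfl
        · simp at hZ
        · -- A → aBb at left : two B's
          have hk := hcv NT3.B
          rw [hy, hxx, hyy] at hk; simp at hk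
        · simp at hZ
        · simp at hZ
        · -- A → BC at left : two B's
          have hk := hcv NT3.B
          rw [hy, hxx, hyy] at hk; simp at hk
        · -- A → c at left
          subst hy hxx hyy
          convert Reach.r3 i (i + 1) [Symb.nt NT3.B] hi (EF.var _) using 1
          simp [seg, List.append_assoc]
      · rcases hr with rfl | rfl | rfl | rfl | rfl | rfl
        · simp at hZ
        · simp at hZ
        · -- B → C at right
          subst hy hxx hyy
          convert Reach.r1 NT3.A NT3.C i (i + 1) ⟨hi, by simp⟩ using 1
          simp [seg, List.append_assoc]
        · simp at hZ
        · simp at hZ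
        · simp at hZ
    · -- (A, C, i, i+1)
      have hx' : x ++ Symb.nt r.1 :: y =
          tmw (List.replicate i ABC.a) ++ Symb.nt NT3.A ::
            (tmw (List.replicate i ABC.b ++ List.replicate (i + 1) ABC.a) ++
              Symb.nt NT3.C :: tmw (List.replicate (i + 1) ABC.b)) := by
        rw [← hx]; simp [seg, List.append_assoc]
      rcases loc_two hx' with ⟨hZ, hxx, hyy⟩ | ⟨hZ, hxx, hyy⟩
      · rcases hr with rfl | rfl | rfl | rfl | rfl | rfl
        · simp at hZ
        · -- A → aBb at left
          subst hy hxx hyy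
          convert Reach.r1 NT3.B NT3.C (i + 1) (i + 1) ⟨by omega, by simp⟩ using 1
          simp [seg, List.append_assoc, List.replicate_succ']
        · simp at hZ
        · simp at hZ
        · -- A → BC at left : two C's
          have hk := hcv NT3.C
          rw [hy, hxx, hyy] at hk; simp at hk
        · -- A → c at left
          subst hy hxx hyy
          convert Reach.r3 i (i + 1) [Symb.nt NT3.C] hi (EF.var _) using 1
          simp [seg, List.append_assoc]
      · rcases hr with rfl | rfl | rfl | rfl | rfl | rfl
        · simp at hZ
        · simp at hZ
        · simp at hZ
        · -- C → A at right : two A's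
          have hk := hcv NT3.A
          rw [hy, hxx, hyy] at hk; simp at hk
        · simp at hZ
        · simp at hZ
    · -- (B, C, j, j)
      have hx' : x ++ Symb.nt r.1 :: y =
          tmw (List.replicate j ABC.a) ++ Symb.nt NT3.B ::
            (tmw (List.replicate j ABC.b ++ List.replicate j ABC.a) ++
              Symb.nt NT3.C :: tmw (List.replicate j ABC.b)) := by
        rw [← hx]; simp [seg, List.append_assoc]
      rcases loc_two hx' with ⟨hZ, hxx, hyy⟩ | ⟨hZ, hxx, hyy⟩
      · rcases hr with rfl | rfl | rfl | rfl | rfl | rfl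
        · simp at hZ
        · simp at hZ
        · -- B → C at left : two C's
          have hk := hcv NT3.C
          rw [hy, hxx, hyy] at hk; simp at hk
        · simp at hZ
        · simp at hZ
        · simp at hZ
      · rcases hr with rfl | rfl | rfl | rfl | rfl | rfl
        · simp at hZ
        · simp at hZ
        · simp at hZ
        · -- C → A at right
          subst hy hxx hyy
          convert Reach.r1 NT3.B NT3.A j j ⟨hi, by simp⟩ using 1
          simp [seg, List.append_assoc]
        · simp at hZ
        · simp at hZ
  | r2 i d hi hd =>
    have hx' : x ++ Symb.nt r.1 :: y =
        tmw (List.replicate i ABC.a) ++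
          (d ++ tmw (List.replicate i ABC.b ++ List.replicate i ABC.a ++
            ABC.c :: List.replicate i ABC.b)) := by
      rw [← hx]; simp [seg, List.append_assoc]
    obtain ⟨x', hxx, h2⟩ := loc1 _ _ x y r.1 hx'
    obtain ⟨y', hd', hyy⟩ := loc2 d _ x' y r.1 h2.symm
    have hEF' : EF (x' ++ r.2 ++ y') := EF_replace hd x' y' r.1 r.2 hd' (EF_rules_rhs hr)
    subst hy hxx hyy
    convert Reach.r2 i (x' ++ r.2 ++ y') hi hEF' using 1
    simp [seg, List.append_assoc]
  | r3 i j d hi hd =>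
    have hx' : x ++ Symb.nt r.1 :: y =
        tmw (List.replicate i ABC.a ++ ABC.c :: (List.replicate i ABC.b ++
          List.replicate j ABC.a)) ++ (d ++ tmw (List.replicate j ABC.b)) := by
      rw [← hx]; simp [seg, List.append_assoc]
    obtain ⟨x', hxx, h2⟩ := loc1 _ _ x y r.1 hx'
    obtain ⟨y', hd', hyy⟩ := loc2 d _ x' y r.1 h2.symm
    have hEF' : EF (x' ++ r.2 ++ y') := EF_replace hd x' y' r.1 r.2 hd' (EF_rules_rhs hr)
    subst hy hxx hyy
    convert Reach.r3 i j (x' ++ r.2 ++ y') hi hEF' using 1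
    simp [seg, List.append_assoc]

lemma tm_inj : Function.Injective (Symb.tm : ABC → Sym) := by
  intro x y h; injection h

lemma tmw_inj {u v : List ABC} (h : tmw u = tmw v) : u = v :=
  List.map_injective_iff.mpr tm_inj h

lemma tmw_split {w : List ABC} {l1 l2 : List Sym} (h : tmw w = l1 ++ l2) :
    ∃ w1 w2, w = w1 ++ w2 ∧ tmw w1 = l1 ∧ tmw w2 = l2 := by
  rw [tmw, List.map_eq_append_iff] at h
  obtain ⟨w1, w2, h0, h1, h2⟩ := h
  exact ⟨w1, w2, h0, h1, h2⟩

lemma reach_terminal {w : List ABC} {l : List Sym} (hR : Reach l)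
    (he : l = tmw w) (hM : w ∈ M3) :
    ∃ n m : ℕ, 1 ≤ m ∧ m ≤ n ∧
      w = List.replicate n ABC.a ++ [ABC.c, ABC.c] ++ List.replicate n ABC.b ++
          List.replicate m ABC.a ++ [ABC.c] ++ List.replicate m ABC.b := by
  obtain ⟨I, J, K, L, hw⟩ := hM
  cases hR with
  | r0 =>
    exfalso
    cases w with
    | nil => simp at he
    | cons t w => simp [tmw] at he
  | r1 X Y i j hP =>
    exfalso
    have hmem : Symb.nt X ∈ tmw w := by rw [← he]; simp [seg]
    simp [tmw] at hmem
  | r2 i d hi hd =>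
    have he' : tmw w = tmw (List.replicate i ABC.a) ++
        (d ++ tmw (List.replicate i ABC.b ++ List.replicate i ABC.a ++
          ABC.c :: List.replicate i ABC.b)) := by
      rw [← he]; simp [seg, List.append_assoc]
    obtain ⟨w1, w2, hw0, hw1, hw2⟩ := tmw_split he'
    obtain ⟨e, w3, hw0', hd', hw3⟩ := tmw_split hw2
    have hw1' : w1 = List.replicate i ABC.a := tmw_inj hw1
    have hw3' : w3 = List.replicate i ABC.b ++ List.replicate i ABC.a ++
        ABC.c :: List.replicate i ABC.b := tmw_inj hw3
    have hWe : W e := EF_tmw hd e hd'.symm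
    -- w = a^i ++ e ++ b^i ++ a^i ++ c :: b^i
    have hwform : w = List.replicate i ABC.a ++ e ++
        (List.replicate i ABC.b ++ List.replicate i ABC.a ++
          ABC.c :: List.replicate i ABC.b) := by
      rw [hw0, hw0', hw1', hw3']; simp [List.append_assoc]
    -- count of c's
    have hcnt : e.count ABC.c = 2 := by
      have h3 := congrArg (List.count ABC.c) (hwform.symm.trans hw)
      simp [List.count_append, List.count_replicate, List.count_cons] at h3
      omega
    obtain ⟨p, s, t, he2⟩ := W_count2 hWe hcnt
    subst he2
    -- peel the leading a's and the two c's
    have hkey : List.replicate (i + (p + s)) ABC.a ++ ABC.c ::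
        (List.replicate s ABC.b ++ List.replicate t ABC.a ++ ABC.c ::
          List.replicate (t + p) ABC.b ++
          (List.replicate i ABC.b ++ List.replicate i ABC.a ++
            ABC.c :: List.replicate i ABC.b)) =
        List.replicate I ABC.a ++ ABC.c ::
          (ABC.c :: (List.replicate J ABC.b ++ List.replicate K ABC.a ++
            ABC.c :: List.replicate L ABC.b)) := by
      rw [List.replicate_add]
      have := hwform.symm.trans hw
      simp only [List.append_assoc, List.cons_append, List.singleton_append,
        List.nil_append] at this ⊢
      exact this
    obtain ⟨hI, htail⟩ := peel_rep (by decide : ABC.c ≠ ABC.a) _ _ _ _ hkey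
    cases s with
    | succ s => rw [List.replicate_succ] at htail; simp at htail
    | zero =>
      cases t with
      | succ t => rw [List.replicate_succ] at htail; simp at htail
      | zero =>
        refine ⟨i + p, i, hi, by omega, ?_⟩
        rw [hwform]
        have ha : List.replicate (i + p) ABC.a =
            List.replicate i ABC.a ++ List.replicate p ABC.a :=
          List.replicate_add i p ABC.a
        have hb : List.replicate (i + p) ABC.b =
            List.replicate p ABC.b ++ List.replicate i ABC.b := by
          rw [Nat.add_comm, List.replicate_add]
        rw [ha, hb]
        simp only [← List.append_assoc]
        simp [List.append_assoc]
  | r3 i j d hi hd =>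
    exfalso
    have he' : tmw w = tmw (List.replicate i ABC.a ++ ABC.c ::
        (List.replicate i ABC.b ++ List.replicate j ABC.a)) ++
        (d ++ tmw (List.replicate j ABC.b)) := by
      rw [← he]; simp [seg, List.append_assoc]
    obtain ⟨w1, w2, hw0, hw1, hw2⟩ := tmw_split he'
    obtain ⟨e, w3, hw0', hd', hw3⟩ := tmw_split hw2
    have hw1' : w1 = _ := tmw_inj hw1
    have hw3' : w3 = List.replicate j ABC.b := tmw_inj hw3
    have hwform : w = List.replicate i ABC.a ++ ABC.c ::
        (List.replicate i ABC.b ++ List.replicate j ABC.a) ++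
        (e ++ List.replicate j ABC.b) := by
      rw [hw0, hw0', hw1', hw3']
    have hkey : List.replicate i ABC.a ++ ABC.c ::
        (List.replicate i ABC.b ++ List.replicate j ABC.a ++
          (e ++ List.replicate j ABC.b)) =
        List.replicate I ABC.a ++ ABC.c ::
          (ABC.c :: (List.replicate J ABC.b ++ List.replicate K ABC.a ++
            ABC.c :: List.replicate L ABC.b)) := by
      have := hwform.symm.trans hw
      simp only [List.append_assoc, List.cons_append, List.singleton_append,
        List.nil_append] at this ⊢
      exact this
    obtain ⟨hI, htail⟩ := peel_rep (by decide : ABC.c ≠ ABC.a) _ _ _ _ hkey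
    obtain ⟨i', rfl⟩ : ∃ i', i = i' + 1 := ⟨i - 1, by omega⟩
    rw [List.replicate_succ] at htail
    simp at htail

/-! ### Backward direction: explicit derivations -/

local notation "CS" => CFG.CapStep G3 (fun _ => (1:ℕ))

lemma capok_ctx {u1 u2 : List ABC} {d : List Sym}
    (h : CapOK (fun _ => (1:ℕ)) d) :
    CapOK (fun _ => (1:ℕ)) (tmw u1 ++ d ++ tmw u2) := by
  intro Z
  simpa using h Z

lemma capstep_ctx {u1 u2 : List ABC} {d d' : List Sym} (h : CS d d') :
    CS (tmw u1 ++ d ++ tmw u2) (tmw u1 ++ d' ++ tmw u2) := by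
  obtain ⟨⟨r, hr, x, y, hx, hy⟩, hcu, hcv⟩ := h
  refine ⟨⟨r, hr, tmw u1 ++ x, y ++ tmw u2, ?_, ?_⟩, capok_ctx hcu, capok_ctx hcv⟩
  · rw [hx]; simp [List.append_assoc]
  · rw [hy]; simp [List.append_assoc]

lemma rtg_ctx (u1 u2 : List ABC) {d d' : List Sym}
    (h : Relation.ReflTransGen CS d d') :
    Relation.ReflTransGen CS (tmw u1 ++ d ++ tmw u2) (tmw u1 ++ d' ++ tmw u2) :=
  Relation.ReflTransGen.lift (fun l => tmw u1 ++ l ++ tmw u2)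
    (fun _ _ hh => capstep_ctx hh) _ _ h

lemma mk_step' (r : NT3 × List Sym) (hr : r ∈ G3.rules) (x y u v : List Sym)
    (hu : u = x ++ Symb.nt r.1 :: y) (hv : v = x ++ r.2 ++ y)
    (hcu : CapOK (fun _ => (1:ℕ)) u) (hcv : CapOK (fun _ => (1:ℕ)) v) :
    CS u v :=
  ⟨⟨r, hr, x, y, hu, hv⟩, hcu, hcv⟩

lemma mem_rS : (NT3.S, [Symb.tm ABC.a, Symb.nt NT3.B, Symb.tm ABC.b,
    Symb.tm ABC.a, Symb.nt NT3.A, Symb.tm ABC.b]) ∈ G3.rules := by simp [G3]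
lemma mem_rA1 : (NT3.A, [Symb.tm ABC.a, Symb.nt NT3.B, Symb.tm ABC.b]) ∈ G3.rules := by
  simp [G3]
lemma mem_rB : (NT3.B, [Symb.nt NT3.C]) ∈ G3.rules := by simp [G3]
lemma mem_rC : (NT3.C, [Symb.nt NT3.A]) ∈ G3.rules := by simp [G3]
lemma mem_rA2 : (NT3.A, [Symb.nt NT3.B, Symb.nt NT3.C]) ∈ G3.rules := by simp [G3]
lemma mem_rA3 : (NT3.A, [Symb.tm ABC.c]) ∈ G3.rules := by simp [G3]

/-- one full synchronized round -/
lemma round (i : ℕ) :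
    Relation.ReflTransGen CS (seg i [Symb.nt NT3.B] ++ seg i [Symb.nt NT3.A])
      (seg (i+1) [Symb.nt NT3.B] ++ seg (i+1) [Symb.nt NT3.A]) := by
  have s1 : CS (seg i [Symb.nt NT3.B] ++ seg i [Symb.nt NT3.A])
      (seg i [Symb.nt NT3.C] ++ seg i [Symb.nt NT3.A]) :=
    mk_step' _ mem_rB (tmw (List.replicate i ABC.a))
      (tmw (List.replicate i ABC.b ++ List.replicate i ABC.a) ++
        Symb.nt NT3.A :: tmw (List.replicate i ABC.b)) _ _
      (by simp [seg, List.append_assoc]) (by simp [seg, List.append_assoc])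
      (by intro Z; cases Z <;> simp [seg])
      (by intro Z; cases Z <;> simp [seg])
  have s2 : CS (seg i [Symb.nt NT3.C] ++ seg i [Symb.nt NT3.A])
      (seg i [Symb.nt NT3.C] ++ seg (i+1) [Symb.nt NT3.B]) :=
    mk_step' _ mem_rA1
      (tmw (List.replicate i ABC.a) ++ Symb.nt NT3.C ::
        tmw (List.replicate i ABC.b ++ List.replicate i ABC.a))
      (tmw (List.replicate i ABC.b)) _ _
      (by simp [seg, List.append_assoc])
      (by simp [seg, List.append_assoc, List.replicate_succ'])
      (by intro Z; cases Z <;> simp [seg])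
      (by intro Z; cases Z <;> simp [seg])
  have s3 : CS (seg i [Symb.nt NT3.C] ++ seg (i+1) [Symb.nt NT3.B])
      (seg i [Symb.nt NT3.A] ++ seg (i+1) [Symb.nt NT3.B]) :=
    mk_step' _ mem_rC (tmw (List.replicate i ABC.a))
      (tmw (List.replicate i ABC.b ++ List.replicate (i+1) ABC.a) ++
        Symb.nt NT3.B :: tmw (List.replicate (i+1) ABC.b)) _ _
      (by simp [seg, List.append_assoc]) (by simp [seg, List.append_assoc])
      (by intro Z; cases Z <;> simp [seg])
      (by intro Z; cases Z <;> simp [seg])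
  have s4 : CS (seg i [Symb.nt NT3.A] ++ seg (i+1) [Symb.nt NT3.B])
      (seg i [Symb.nt NT3.A] ++ seg (i+1) [Symb.nt NT3.C]) :=
    mk_step' _ mem_rB
      (tmw (List.replicate i ABC.a) ++ Symb.nt NT3.A ::
        tmw (List.replicate i ABC.b ++ List.replicate (i+1) ABC.a))
      (tmw (List.replicate (i+1) ABC.b)) _ _
      (by simp [seg, List.append_assoc]) (by simp [seg, List.append_assoc])
      (by intro Z; cases Z <;> simp [seg])
      (by intro Z; cases Z <;> simp [seg])
  have s5 : CS (seg i [Symb.nt NT3.A] ++ seg (i+1) [Symb.nt NT3.C])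
      (seg (i+1) [Symb.nt NT3.B] ++ seg (i+1) [Symb.nt NT3.C]) :=
    mk_step' _ mem_rA1 (tmw (List.replicate i ABC.a))
      (tmw (List.replicate i ABC.b ++ List.replicate (i+1) ABC.a) ++
        Symb.nt NT3.C :: tmw (List.replicate (i+1) ABC.b)) _ _
      (by simp [seg, List.append_assoc])
      (by simp [seg, List.append_assoc, List.replicate_succ'])
      (by intro Z; cases Z <;> simp [seg])
      (by intro Z; cases Z <;> simp [seg])
  have s6 : CS (seg (i+1) [Symb.nt NT3.B] ++ seg (i+1) [Symb.nt NT3.C])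
      (seg (i+1) [Symb.nt NT3.B] ++ seg (i+1) [Symb.nt NT3.A]) :=
    mk_step' _ mem_rC
      (tmw (List.replicate (i+1) ABC.a) ++ Symb.nt NT3.B ::
        tmw (List.replicate (i+1) ABC.b ++ List.replicate (i+1) ABC.a))
      (tmw (List.replicate (i+1) ABC.b)) _ _
      (by simp [seg, List.append_assoc]) (by simp [seg, List.append_assoc])
      (by intro Z; cases Z <;> simp [seg])
      (by intro Z; cases Z <;> simp [seg])
  exact .head s1 (.head s2 (.head s3 (.head s4 (.head s5 (.single s6)))))

lemma reachBA : ∀ m : ℕ, 1 ≤ m →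
    Relation.ReflTransGen CS [Symb.nt NT3.S]
      (seg m [Symb.nt NT3.B] ++ seg m [Symb.nt NT3.A]) := by
  intro m hm
  induction m with
  | zero => omega
  | succ m ih =>
    rcases Nat.eq_or_lt_of_le hm with h1 | h1
    · have s0 : CS [Symb.nt NT3.S]
          (seg 1 [Symb.nt NT3.B] ++ seg 1 [Symb.nt NT3.A]) :=
        mk_step' _ mem_rS [] [] _ _ (by simp) (by simp [seg])
          (by intro Z; cases Z <;> simp)
          (by intro Z; cases Z <;> simp [seg])
      rw [← h1]
      exact .single s0
    · exact (ih (by omega)).trans (round m)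

lemma stepAC_ctx : CS [Symb.nt NT3.A] [Symb.tm ABC.c] :=
  mk_step' _ mem_rA3 [] [] _ _ (by simp) (by simp)
    (by intro Z; cases Z <;> simp) (by intro Z; cases Z <;> simp)

lemma growA : ∀ rr : ℕ, Relation.ReflTransGen CS [Symb.nt NT3.A]
    (tmw (List.replicate rr ABC.a) ++ [Symb.nt NT3.A] ++
      tmw (List.replicate rr ABC.b)) := by
  intro rr
  induction rr with
  | zero => simpa using Relation.ReflTransGen.refl
  | succ rr ih =>
    have s1 : CS [Symb.nt NT3.A] [Symb.tm ABC.a, Symb.nt NT3.B, Symb.tm ABC.b] :=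
      mk_step' _ mem_rA1 [] [] _ _ (by simp) (by simp)
        (by intro Z; cases Z <;> simp) (by intro Z; cases Z <;> simp)
    have s2 : CS [Symb.tm ABC.a, Symb.nt NT3.B, Symb.tm ABC.b]
        [Symb.tm ABC.a, Symb.nt NT3.C, Symb.tm ABC.b] :=
      mk_step' _ mem_rB [Symb.tm ABC.a] [Symb.tm ABC.b] _ _ (by simp) (by simp)
        (by intro Z; cases Z <;> simp) (by intro Z; cases Z <;> simp)
    have s3 : CS [Symb.tm ABC.a, Symb.nt NT3.C, Symb.tm ABC.b]
        [Symb.tm ABC.a, Symb.nt NT3.A, Symb.tm ABC.b] :=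
      mk_step' _ mem_rC [Symb.tm ABC.a] [Symb.tm ABC.b] _ _ (by simp) (by simp)
        (by intro Z; cases Z <;> simp) (by intro Z; cases Z <;> simp)
    have lift := rtg_ctx [ABC.a] [ABC.b] ih
    have e : tmw [ABC.a] ++ (tmw (List.replicate rr ABC.a) ++ [Symb.nt NT3.A] ++
        tmw (List.replicate rr ABC.b)) ++ tmw [ABC.b] =
        tmw (List.replicate (rr+1) ABC.a) ++ [Symb.nt NT3.A] ++
          tmw (List.replicate (rr+1) ABC.b) := by
      simp [List.replicate_succ, List.replicate_succ', List.append_assoc]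
    have lift' := e ▸ lift
    have h0 : tmw [ABC.a] ++ [Symb.nt NT3.A] ++ tmw [ABC.b] =
        [Symb.tm ABC.a, Symb.nt NT3.A, Symb.tm ABC.b] := by simp
    exact .head s1 (.head s2 (.head s3 (h0 ▸ lift')))

lemma finishBC : Relation.ReflTransGen CS [Symb.nt NT3.A]
    (tmw [ABC.c, ABC.c]) := by
  have s1 : CS [Symb.nt NT3.A] [Symb.nt NT3.B, Symb.nt NT3.C] :=
    mk_step' _ mem_rA2 [] [] _ _ (by simp) (by simp)
      (by intro Z; cases Z <;> simp) (by intro Z; cases Z <;> simp)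
  have s2 : CS [Symb.nt NT3.B, Symb.nt NT3.C] [Symb.nt NT3.B, Symb.nt NT3.A] :=
    mk_step' _ mem_rC [Symb.nt NT3.B] [] _ _ (by simp) (by simp)
      (by intro Z; cases Z <;> simp) (by intro Z; cases Z <;> simp)
  have s3 : CS [Symb.nt NT3.B, Symb.nt NT3.A] [Symb.nt NT3.B, Symb.tm ABC.c] :=
    mk_step' _ mem_rA3 [Symb.nt NT3.B] [] _ _ (by simp) (by simp)
      (by intro Z; cases Z <;> simp) (by intro Z; cases Z <;> simp)
  have s4 : CS [Symb.nt NT3.B, Symb.tm ABC.c] [Symb.nt NT3.C, Symb.tm ABC.c] :=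
    mk_step' _ mem_rB [] [Symb.tm ABC.c] _ _ (by simp) (by simp)
      (by intro Z; cases Z <;> simp) (by intro Z; cases Z <;> simp)
  have s5 : CS [Symb.nt NT3.C, Symb.tm ABC.c] [Symb.nt NT3.A, Symb.tm ABC.c] :=
    mk_step' _ mem_rC [] [Symb.tm ABC.c] _ _ (by simp) (by simp)
      (by intro Z; cases Z <;> simp) (by intro Z; cases Z <;> simp)
  have s6 : CS [Symb.nt NT3.A, Symb.tm ABC.c] [Symb.tm ABC.c, Symb.tm ABC.c] :=
    mk_step' _ mem_rA3 [] [Symb.tm ABC.c] _ _ (by simp) (by simp)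
      (by intro Z; cases Z <;> simp) (by intro Z; cases Z <;> simp)
  exact .head s1 (.head s2 (.head s3 (.head s4 (.head s5 (.single s6)))))

lemma innerB (rr : ℕ) : Relation.ReflTransGen CS [Symb.nt NT3.B]
    (tmw (List.replicate rr ABC.a ++ ABC.c :: ABC.c :: List.replicate rr ABC.b)) := by
  have s1 : CS [Symb.nt NT3.B] [Symb.nt NT3.C] :=
    mk_step' _ mem_rB [] [] _ _ (by simp) (by simp)
      (by intro Z; cases Z <;> simp) (by intro Z; cases Z <;> simp)
  have s2 : CS [Symb.nt NT3.C] [Symb.nt NT3.A] :=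
    mk_step' _ mem_rC [] [] _ _ (by simp) (by simp)
      (by intro Z; cases Z <;> simp) (by intro Z; cases Z <;> simp)
  have lift := rtg_ctx (List.replicate rr ABC.a) (List.replicate rr ABC.b) finishBC
  have e1 : tmw (List.replicate rr ABC.a) ++ [Symb.nt NT3.A] ++
      tmw (List.replicate rr ABC.b) =
      tmw (List.replicate rr ABC.a) ++ [Symb.nt NT3.A] ++
        tmw (List.replicate rr ABC.b) := rfl
  have e2 : tmw (List.replicate rr ABC.a) ++ tmw [ABC.c, ABC.c] ++
      tmw (List.replicate rr ABC.b) =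
      tmw (List.replicate rr ABC.a ++ ABC.c :: ABC.c :: List.replicate rr ABC.b) := by
    simp [List.append_assoc]
  exact .head s1 (.head s2 ((growA rr).trans (e2 ▸ lift)))

lemma derive_word (n m : ℕ) (hm : 1 ≤ m) (hmn : m ≤ n) :
    Relation.ReflTransGen CS [Symb.nt NT3.S]
      (tmw (List.replicate n ABC.a ++ [ABC.c, ABC.c] ++ List.replicate n ABC.b ++
        List.replicate m ABC.a ++ [ABC.c] ++ List.replicate m ABC.b)) := by
  obtain ⟨k, rfl⟩ : ∃ k, n = m + k := ⟨n - m, by omega⟩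
  have h1 := reachBA m hm
  have hexit : CS (seg m [Symb.nt NT3.B] ++ seg m [Symb.nt NT3.A])
      (tmw (List.replicate m ABC.a) ++ [Symb.nt NT3.B] ++
        tmw (List.replicate m ABC.b ++ List.replicate m ABC.a ++
          ABC.c :: List.replicate m ABC.b)) :=
    mk_step' _ mem_rA3
      (tmw (List.replicate m ABC.a) ++ Symb.nt NT3.B ::
        tmw (List.replicate m ABC.b ++ List.replicate m ABC.a))
      (tmw (List.replicate m ABC.b)) _ _
      (by simp [seg, List.append_assoc]) (by simp [seg, List.append_assoc])
      (by intro Z; cases Z <;> simp [seg])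
      (by intro Z; cases Z <;> simp [seg])
  have hlift := rtg_ctx (List.replicate m ABC.a)
      (List.replicate m ABC.b ++ List.replicate m ABC.a ++
        ABC.c :: List.replicate m ABC.b) (innerB k)
  have ha : List.replicate (m + k) ABC.a =
      List.replicate m ABC.a ++ List.replicate k ABC.a := List.replicate_add _ _ _
  have hb : List.replicate (m + k) ABC.b =
      List.replicate k ABC.b ++ List.replicate m ABC.b := by
    rw [Nat.add_comm, List.replicate_add]
  have e : tmw (List.replicate m ABC.a) ++
      tmw (List.replicate k ABC.a ++ ABC.c :: ABC.c :: List.replicate k ABC.b) ++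
      tmw (List.replicate m ABC.b ++ List.replicate m ABC.a ++
        ABC.c :: List.replicate m ABC.b) =
      tmw (List.replicate (m + k) ABC.a ++ [ABC.c, ABC.c] ++
        List.replicate (m + k) ABC.b ++
        List.replicate m ABC.a ++ [ABC.c] ++ List.replicate m ABC.b) := by
    rw [ha, hb]
    simp only [tmw_append, tmw_cons, tmw_nil, List.append_assoc,
      List.cons_append, List.singleton_append, List.nil_append, List.append_nil]
  exact h1.trans (Relation.ReflTransGen.head hexit (e ▸ hlift))

lemma capLang_reach {l : List Sym}
    (h : Relation.ReflTransGen (G3.CapStep fun _ => 1) [Symb.nt NT3.S] l) :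
    Reach l := by
  induction h with
  | refl => exact Reach.r0
  | tail _ hstep ih => exact reach_step ih hstep

end Example3Aux

/-- L(G3) ∩ a*ccb*a*cb* = { aⁿccbⁿaᵐcbᵐ : n ≥ m ≥ 1 }. -/
theorem example3_intersection :
    CFG.CapLang G3 (fun _ => 1) ∩ M3 =
      { w | ∃ n m : ℕ, 1 ≤ m ∧ m ≤ n ∧
          w = List.replicate n ABC.a ++ [ABC.c, ABC.c] ++ List.replicate n ABC.b ++
              List.replicate m ABC.a ++ [ABC.c] ++ List.replicate m ABC.b } := by
  ext w
  constructor
  · rintro ⟨h1, h2⟩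
    have h1' : Relation.ReflTransGen (G3.CapStep fun _ => 1)
        [Symb.nt NT3.S] (tmw w) := h1
    exact reach_terminal (capLang_reach h1') rfl h2
  · rintro ⟨n, m, hm, hmn, rfl⟩
    refine ⟨?_, ⟨n, n, m, m, rfl⟩⟩
    show Relation.ReflTransGen (G3.CapStep fun _ => 1) [Symb.nt G3.start] _
    exact derive_word n m hm hmn

end CapGram
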